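/- Let G be a graph and let G' be obtained from G by adding, for each edge uv of G, a new vertex w_{uv} adjacent exactly to u and v. If F is a set of non-edges of G such that G + F contains no induced C4, then G' + F contains no induced house. -/

import Mathlib

/-- The cycle on 4 vertices. -/
def C4 : SimpleGraph (Fin 4) :=
  SimpleGraph.fromEdgeSet {s(0,1), s(1,2), s(2,3), s(3,0)}

/-- The house graph: a 4-cycle with a fifth vertex adjacent to two adjacent
cycle vertices (the complement of `P5`). -/
def house : SimpleGraph (Fin 5) :=
  SimpleGraph.fromEdgeSet {s(0,1), s(1,2), s(2,3), s(3,0), s(0,4), s(1,4)}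

/-- The graph `G'` obtained from `G` by adding, for each edge `uv` of `G`, a new
vertex `w_{uv}` adjacent exactly to `u` and `v`; the new vertices are pairwise
distinct and non-adjacent. -/
def edgeWitnessGraph {V : Type*} (G : SimpleGraph V) :
    SimpleGraph (V ⊕ {p : V × V // G.Adj p.1 p.2}) :=
  SimpleGraph.fromRel (fun x y =>
    match x, y with
    | Sum.inl a, Sum.inl b => G.Adj a b
    | Sum.inl a, Sum.inr e => a = e.1.1 ∨ a = e.1.2
    | _, _ => False)

/-!
The 4-cycle is an induced subgraph of the house, so it suffices to show that every induced `C4`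
of `G' + F` lies in `G + F`. A new vertex `w_{uv}` cannot lie on an induced `C4`: its two
neighbours on the cycle would be `u` and `v`, which are adjacent, whereas the two neighbours of a
vertex of an induced `C4` are not.
-/

open SimpleGraph

lemma C4.exists_nonadj_neighbors (i : Fin 4) :
    ∃ j k, C4.Adj i j ∧ C4.Adj i k ∧ j ≠ k ∧ ¬ C4.Adj j k := by
  fin_cases i
  exacts [⟨1, 3, by simp [C4]⟩, ⟨0, 2, by simp [C4]⟩, ⟨1, 3, by simp [C4]⟩, ⟨0, 2, by simp [C4]⟩]

def C4.embeddingHouse : C4 ↪g house where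
  toEmbedding := Fin.castSuccEmb
  map_rel_iff' {a b} := by fin_cases a <;> fin_cases b <;> simp [house, C4]

lemma C4.embedding_ne_of_isClique_neighborSet {W : Type*} {H : SimpleGraph W}
    (φ : C4 ↪g H) {w : W} (hw : H.IsClique (H.neighborSet w)) (i : Fin 4) : φ i ≠ w := by
  rintro rfl
  obtain ⟨j, k, hij, hik, hjk, hnjk⟩ := C4.exists_nonadj_neighbors i
  exact hnjk (φ.map_adj_iff.mp (hw (φ.map_adj_iff.mpr hij) (φ.map_adj_iff.mpr hik)
    (φ.injective.ne hjk)))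

lemma SimpleGraph.Embedding.nonempty_comap_of_range_subset {A V W : Type*} {K : SimpleGraph A}
    {H : SimpleGraph W} (φ : K ↪g H) (f : V ↪ W) (h : Set.range φ ⊆ Set.range f) :
    Nonempty (K ↪g H.comap f) := by
  choose g hg using fun a => h ⟨a, rfl⟩
  refine ⟨⟨⟨g, fun a b hab => φ.injective ?_⟩, ?_⟩⟩
  · rw [← hg a, ← hg b, hab]
  · intro a b
    change H.Adj (f (g a)) (f (g b)) ↔ K.Adj a b
    rw [hg, hg, φ.map_adj_iff]

section edgeWitnessGraph

variable {V : Type*} (G : SimpleGraph V) (F : Set (Sym2 V))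

lemma edgeWitnessGraph_sup_inl_adj_inl {a b : V} :
    (edgeWitnessGraph G ⊔ fromEdgeSet (Sym2.map Sum.inl '' F)).Adj (Sum.inl a) (Sum.inl b) ↔
      (G ⊔ fromEdgeSet F).Adj a b := by
  simp only [sup_adj, edgeWitnessGraph, fromRel_adj, fromEdgeSet_adj, ne_eq, Sum.inl.injEq,
    Set.mem_image]
  constructor
  · rintro (⟨hne, h | h⟩ | ⟨⟨p, hp, heq⟩, hne⟩)
    · exact Or.inl h
    · exact Or.inl h.symm
    · have : p = s(a, b) := Sym2.map.injective Sum.inl_injective (by rw [heq]; rfl)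
      exact Or.inr ⟨this ▸ hp, hne⟩
  · rintro (h | ⟨hmem, hne⟩)
    · exact Or.inl ⟨h.ne, Or.inl h⟩
    · exact Or.inr ⟨⟨s(a, b), hmem, rfl⟩, hne⟩

lemma edgeWitnessGraph_sup_comap_inl :
    (edgeWitnessGraph G ⊔ fromEdgeSet (Sym2.map Sum.inl '' F)).comap Function.Embedding.inl =
      G ⊔ fromEdgeSet F := by
  ext a b
  exact edgeWitnessGraph_sup_inl_adj_inl G F

lemma edgeWitnessGraph_sup_adj_inr {e : {p : V × V // G.Adj p.1 p.2}} {x : V ⊕ _}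
    (h : (edgeWitnessGraph G ⊔ fromEdgeSet (Sym2.map Sum.inl '' F)).Adj (Sum.inr e) x) :
    x = Sum.inl e.1.1 ∨ x = Sum.inl e.1.2 := by
  rcases h with h | ⟨⟨p, -, heq⟩, -⟩
  · rw [edgeWitnessGraph, fromRel_adj] at h
    rcases x with a | e' <;> simp_all [eq_comm]
  · induction p using Sym2.ind with
    | _ u v => simp at heq

lemma edgeWitnessGraph_sup_isClique_neighborSet_inr (e : {p : V × V // G.Adj p.1 p.2}) :
    (edgeWitnessGraph G ⊔ fromEdgeSet (Sym2.map Sum.inl '' F)).IsClique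
      ((edgeWitnessGraph G ⊔ fromEdgeSet (Sym2.map Sum.inl '' F)).neighborSet (Sum.inr e)) := by
  intro x hx y hy hxy
  have hinl {a b} (hab : G.Adj a b) := (edgeWitnessGraph_sup_inl_adj_inl G F).mpr (Or.inl hab)
  rcases edgeWitnessGraph_sup_adj_inr G F hx with rfl | rfl <;>
    rcases edgeWitnessGraph_sup_adj_inr G F hy with rfl | rfl
  exacts [absurd rfl hxy, hinl e.2, hinl e.2.symm, absurd rfl hxy]

end edgeWitnessGraph

theorem completion_house_free_general {V : Type*} (G : SimpleGraph V)
    (F : Set (Sym2 V))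
    (hfree : IsEmpty (C4 ↪g (G ⊔ SimpleGraph.fromEdgeSet F))) :
    IsEmpty (house ↪g
      (edgeWitnessGraph G ⊔ SimpleGraph.fromEdgeSet (Sym2.map Sum.inl '' F))) := by
  refine ⟨fun φ => hfree.elim ?_⟩
  let ψ := φ.comp C4.embeddingHouse
  have hrange : Set.range ψ ⊆ Set.range Sum.inl := by
    rintro _ ⟨i, rfl⟩
    rcases hψ : ψ i with v | e
    · exact ⟨v, rfl⟩
    · exact absurd hψ (C4.embedding_ne_of_isClique_neighborSet ψ
        (edgeWitnessGraph_sup_isClique_neighborSet_inr G F e) i)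
  rw [← edgeWitnessGraph_sup_comap_inl]
  exact (ψ.nonempty_comap_of_range_subset Function.Embedding.inl hrange).some

/-- If `F` is a set of non-edges of `G` such that `G + F` contains no induced
`C4`, then `G' + F` contains no induced house. -/
theorem completion_house_free {V : Type*} (G : SimpleGraph V)
    (F : Set (Sym2 V)) (hF : F ⊆ Gᶜ.edgeSet)
    (hfree : IsEmpty (C4 ↪g (G ⊔ SimpleGraph.fromEdgeSet F))) :
    IsEmpty (house ↪g
      (edgeWitnessGraph G ⊔ SimpleGraph.fromEdgeSet (Sym2.map Sum.inl '' F))) :=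
  completion_house_free_general G F hfree
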